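/- Let N = 1 + p + q + r and write points of ℂ^N as (z, u, v, w) ∈ ℂ × ℂ^p × ℂ^q × ℂ^r, so that ℍ^N = {(z,u,v,w) : Im z > |u|² + |v|² + |w|²}. Let A ∈ ℂ^{r×r} with ρ(A) < 1 and ‖A‖ ≤ 1, b ∈ ℂ, c ∈ ℂ^r, and let ψ(z,u,v,w) = (z + 2i⟨w, c⟩ + b, u, v, A w) be a self-map of ℍ^N. Suppose M ∈ ℂ^{r×r} satisfies exp(M) = A, and for t ≥ 0 define c_t = (I − exp(M)ᴴ)^{−1}(I − exp(tM)ᴴ) c, Q_t = I − exp(tM)ᴴ exp(tM), and b_t = t b. If (1) M is dissipative, and (2) for every t ≥ 0 there exists x_t ∈ ℂ^r with Q_t x_t = c_t and t·Im(b) ≥ x_tᴴ c_t, then ψ can be embedded into a semigroup of holomorphic self-maps of ℍ^N (given explicitly by ψ_t(z,u,v,w) = (z + 2i⟨w, c_t⟩ + b_t, u, v, exp(tM) w)). -/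

import Mathlib

/-!
The maps `ψ_t` are affine in `(z, w)`, and the semigroup law reduces to the cocycle identity
`c_{s+t} = c_t + exp(tM)ᴴ c_s`, which holds because `(I - exp(M)ᴴ)⁻¹` commutes with `exp(tM)ᴴ`;
`ρ(A) < 1` makes `I - Aᴴ` invertible, so `c_1 = c` and `ψ_1 = ψ`.

Dissipativity makes `‖exp(tM) w‖` nonincreasing in `t`, so `Q_t` is positive semidefinite.
Expanding `⟨Q_t (w + x_t), w + x_t⟩ ≥ 0` with `Q_t x_t = c_t` and `t Im b ≥ x_tᴴ c_t` gives
`‖exp(tM) w‖² ≤ ‖w‖² + 2 Re ⟨w, c_t⟩ + t Im b`, i.e. `ψ_t` maps `ℍ^N` into itself.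
Finally `(t, x) ↦ ψ_t x` is jointly continuous, hence `ψ_t → id` uniformly on compacta.
-/

open Matrix Set Complex Filter

noncomputable section

/-- The Hermitian inner product `⟨x, y⟩ = ∑ j, x j * conj (y j)` on `ℂ^n`. -/
def herm {n : Type*} [Fintype n] (x y : n → ℂ) : ℂ :=
  ∑ j, x j * (starRingEnd ℂ) (y j)

/-- The squared Euclidean norm on `ℂ^n`. -/
def enormSq {n : Type*} [Fintype n] (x : n → ℂ) : ℝ :=
  ∑ j, ‖x j‖ ^ 2

/-- The operator (spectral) norm of `A` is at most `1`. -/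
def OpNormLeOne {n : Type*} [Fintype n] (A : Matrix n n ℂ) : Prop :=
  ∀ x : n → ℂ, enormSq (A.mulVec x) ≤ enormSq x

/-- A matrix `M` is dissipative if `Re (wᴴ M w) ≤ 0` for all vectors `w`. -/
def Dissipative {n : Type*} [Fintype n] (M : Matrix n n ℂ) : Prop :=
  ∀ w : n → ℂ, (herm (M.mulVec w) w).re ≤ 0

/-- `(φ t)_{t ≥ 0}` is a (continuous) semigroup of holomorphic self-maps of `U`. -/
def IsHolSemigroupOn {E : Type*} [NormedAddCommGroup E] [NormedSpace ℂ E]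
    (U : Set E) (φ : ℝ → E → E) : Prop :=
  (∀ t : ℝ, 0 ≤ t → MapsTo (φ t) U U) ∧
  (∀ t : ℝ, 0 ≤ t → DifferentiableOn ℂ (φ t) U) ∧
  (∀ z ∈ U, φ 0 z = z) ∧
  (∀ s : ℝ, 0 ≤ s → ∀ t : ℝ, 0 ≤ t → ∀ z ∈ U, φ (s + t) z = φ s (φ t z)) ∧
  (∀ K : Set E, K ⊆ U → IsCompact K →
    TendstoUniformlyOn (fun t => φ t) id (nhdsWithin 0 (Ioi 0)) K)

/-- `ℂ^N = ℂ × ℂ^p × ℂ^q × ℂ^r`. -/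
abbrev E4 (p q r : ℕ) : Type := ℂ × (Fin p → ℂ) × (Fin q → ℂ) × (Fin r → ℂ)

/-- The Siegel half-plane `ℍ^N = {(z,u,v,w) : Im z > |u|² + |v|² + |w|²}`. -/
def Siegel4 (p q r : ℕ) : Set (E4 p q r) :=
  {x | enormSq x.2.1 + enormSq x.2.2.1 + enormSq x.2.2.2 < x.1.im}

/-- `c_t = (I - exp(M)ᴴ)⁻¹ (I - exp(tM)ᴴ) c`. -/
def ct {r : ℕ} (M : Matrix (Fin r) (Fin r) ℂ) (c : Fin r → ℂ) (t : ℝ) : Fin r → ℂ :=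
  (((1 : Matrix (Fin r) (Fin r) ℂ) - (NormedSpace.exp M)ᴴ)⁻¹ *
    ((1 : Matrix (Fin r) (Fin r) ℂ) - (NormedSpace.exp ((t : ℂ) • M))ᴴ)).mulVec c

/-- `Q_t = I - exp(tM)ᴴ exp(tM)`. -/
def Qt {r : ℕ} (M : Matrix (Fin r) (Fin r) ℂ) (t : ℝ) : Matrix (Fin r) (Fin r) ℂ :=
  (1 : Matrix (Fin r) (Fin r) ℂ)
    - (NormedSpace.exp ((t : ℂ) • M))ᴴ * NormedSpace.exp ((t : ℂ) • M)

section Herm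

variable {n : Type*} [Fintype n]

lemma herm_conj_symm (x y : n → ℂ) : starRingEnd ℂ (herm x y) = herm y x := by
  simp [herm, map_sum, mul_comm]

lemma re_herm_comm (x y : n → ℂ) : (herm x y).re = (herm y x).re := by
  rw [← herm_conj_symm, Complex.conj_re]

lemma herm_add_left (x x' y : n → ℂ) : herm (x + x') y = herm x y + herm x' y := by
  simp [herm, add_mul, Finset.sum_add_distrib]

lemma herm_add_right (x y y' : n → ℂ) : herm x (y + y') = herm x y + herm x y' := by
  simp [herm, mul_add, Finset.sum_add_distrib]

lemma herm_sub_left (x x' y : n → ℂ) : herm (x - x') y = herm x y - herm x' y := by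
  simp [herm, sub_mul, Finset.sum_sub_distrib]

@[simp]
lemma herm_zero_right (x : n → ℂ) : herm x 0 = 0 := by
  simp [herm]

lemma herm_self (x : n → ℂ) : herm x x = enormSq x := by
  simp [herm, enormSq, Complex.mul_conj, Complex.normSq_eq_norm_sq]

lemma herm_mulVec_left (A : Matrix n n ℂ) (x y : n → ℂ) :
    herm (A *ᵥ x) y = herm x (Aᴴ *ᵥ y) := by
  simp only [herm, mulVec, dotProduct, conjTranspose_apply, map_sum, map_mul,
    Finset.sum_mul, Finset.mul_sum]
  rw [Finset.sum_comm]
  refine Finset.sum_congr rfl fun i _ => Finset.sum_congr rfl fun j _ => ?_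
  simp only [starRingEnd_apply, star_star]
  ring

lemma differentiable_herm_left (y : n → ℂ) : Differentiable ℂ fun x : n → ℂ => herm x y := by
  unfold herm
  fun_prop

lemma differentiable_mulVec {m : Type*} (A : Matrix m n ℂ) :
    Differentiable ℂ fun x : n → ℂ => A *ᵥ x :=
  (mulVecLin A).toContinuousLinearMap.differentiable

theorem HasDerivAt.enormSq {y : ℝ → n → ℂ} {y' : n → ℂ} {t : ℝ} (hy : HasDerivAt y y' t) :
    HasDerivAt (fun s => _root_.enormSq (y s)) (2 * (herm y' (y t)).re) t := by
  have h := HasDerivAt.fun_sum fun j (_ : j ∈ Finset.univ) => (hasDerivAt_pi.1 hy j).norm_sq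
  simpa [_root_.enormSq, herm, Complex.inner, Finset.mul_sum, mul_comm] using h

end Herm

section Contraction

variable {n : Type*} [Fintype n] [DecidableEq n]

lemma re_herm_one_sub_conjTranspose_mul_self_mulVec (E : Matrix n n ℂ) (v : n → ℂ) :
    (herm ((1 - Eᴴ * E) *ᵥ v) v).re = enormSq v - enormSq (E *ᵥ v) := by
  rw [sub_mulVec, one_mulVec, herm_sub_left, ← mulVec_mulVec, herm_mulVec_left,
    conjTranspose_conjTranspose, herm_self, herm_self]
  simp

lemma OpNormLeOne.enormSq_mulVec_le {E : Matrix n n ℂ} (hE : OpNormLeOne E) (w x : n → ℂ) :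
    enormSq (E *ᵥ w) ≤ enormSq w + 2 * (herm ((1 - Eᴴ * E) *ᵥ x) w).re
      + (herm ((1 - Eᴴ * E) *ᵥ x) x).re := by
  set Q := 1 - Eᴴ * E with hQ
  have hQsymm : (herm (Q *ᵥ w) x).re = (herm (Q *ᵥ x) w).re := by
    rw [herm_mulVec_left, show Qᴴ = Q by simp [hQ], re_herm_comm]
  have hexpand : herm (Q *ᵥ (w + x)) (w + x)
      = herm (Q *ᵥ w) w + herm (Q *ᵥ w) x + herm (Q *ᵥ x) w + herm (Q *ᵥ x) x := by
    rw [mulVec_add, herm_add_left, herm_add_right, herm_add_right]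
    ring
  have hre := congrArg Complex.re hexpand
  simp only [hQ, Complex.add_re, re_herm_one_sub_conjTranspose_mul_self_mulVec] at hre hQsymm ⊢
  linarith [hE (w + x)]

end Contraction

section ExpFlow

attribute [local instance] Matrix.linftyOpNormedAddCommGroup Matrix.linftyOpNormedRing
  Matrix.linftyOpNormedAlgebra

variable {n : Type*} [Fintype n] [DecidableEq n] (M : Matrix n n ℂ)

lemma exp_ofReal_add_smul (s t : ℝ) :
    NormedSpace.exp (((s + t : ℝ) : ℂ) • M)
      = NormedSpace.exp ((s : ℂ) • M) * NormedSpace.exp ((t : ℂ) • M) := by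
  rw [Complex.ofReal_add, add_smul]
  exact NormedSpace.exp_add_of_commute (((Commute.refl M).smul_left _).smul_right _)

lemma continuous_exp_ofReal_smul : Continuous fun t : ℝ => NormedSpace.exp ((t : ℂ) • M) := by
  fun_prop

lemma hasDerivAt_exp_ofReal_smul_mulVec (w : n → ℂ) (t : ℝ) :
    HasDerivAt (fun s : ℝ => NormedSpace.exp ((s : ℂ) • M) *ᵥ w)
      (M *ᵥ (NormedSpace.exp ((t : ℂ) • M) *ᵥ w)) t := by
  have h := hasDerivAt_exp_smul_const' (𝕂 := ℝ) M t
  simp only [Complex.coe_smul, mulVec_mulVec]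
  exact ((mulVecBilin ℝ ℝ).flip w).toContinuousLinearMap.hasFDerivAt.comp_hasDerivAt t h

lemma Dissipative.opNormLeOne_exp {M : Matrix n n ℂ} (hM : Dissipative M) {t : ℝ} (ht : 0 ≤ t) :
    OpNormLeOne (NormedSpace.exp ((t : ℂ) • M)) := by
  intro w
  have hanti : Antitone fun s : ℝ => enormSq (NormedSpace.exp ((s : ℂ) • M) *ᵥ w) :=
    antitone_of_hasDerivAt_nonpos (fun s => (hasDerivAt_exp_ofReal_smul_mulVec M w s).enormSq)
      fun s => by
        rw [Pi.zero_apply]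
        linarith [hM (NormedSpace.exp ((s : ℂ) • M) *ᵥ w)]
  simpa using hanti ht

end ExpFlow

theorem Commute.ringInverse_right {M₀ : Type*} [MonoidWithZero M₀] {a b : M₀} (h : Commute a b) :
    Commute a (Ring.inverse b) := by
  by_cases hb : IsUnit b
  · obtain ⟨u, rfl⟩ := hb
    rw [Ring.inverse_unit]
    exact h.units_inv_right
  · rw [Ring.inverse_non_unit _ hb]
    exact Commute.zero_right a

section Cocycle

variable {r : ℕ} (M : Matrix (Fin r) (Fin r) ℂ) (c : Fin r → ℂ)

@[simp]
lemma ct_zero : ct M c 0 = 0 := by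
  simp [ct]

lemma ct_one (h : 1 ∉ spectrum ℂ (NormedSpace.exp M)) : ct M c 1 = c := by
  have hunit : IsUnit (1 - NormedSpace.exp M) := by
    simpa using spectrum.notMem_iff.mp h
  have hdet : IsUnit (1 - (NormedSpace.exp M)ᴴ).det := by
    rw [← conjTranspose_one, ← conjTranspose_sub, det_conjTranspose]
    exact ((isUnit_iff_isUnit_det _).mp hunit).star
  simp [ct, nonsing_inv_mul _ hdet]

lemma ct_add (s t : ℝ) :
    ct M c (s + t) = ct M c t + (NormedSpace.exp ((t : ℂ) • M))ᴴ *ᵥ ct M c s := by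
  have hsum : (NormedSpace.exp (((s + t : ℝ) : ℂ) • M))ᴴ
      = (NormedSpace.exp ((t : ℂ) • M))ᴴ * (NormedSpace.exp ((s : ℂ) • M))ᴴ := by
    rw [exp_ofReal_add_smul, conjTranspose_mul]
  unfold ct
  rw [hsum, mulVec_mulVec, ← add_mulVec]
  set D := 1 - (NormedSpace.exp M)ᴴ
  set Et := NormedSpace.exp ((t : ℂ) • M)
  have hcomm : Commute Etᴴ D⁻¹ := by
    have h : Commute Et (NormedSpace.exp M) := ((Commute.refl M).smul_left _).exp
    rw [nonsing_inv_eq_ringInverse]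
    exact ((Commute.one_right _).sub_right h.star_star).ringInverse_right
  rw [← mul_assoc Etᴴ, hcomm.eq]
  congr 1
  noncomm_ring

lemma continuous_ct : Continuous (ct M c) := by
  unfold ct
  have := continuous_exp_ofReal_smul M
  fun_prop

end Cocycle

theorem Continuous.tendstoUniformlyOn_of_isCompact {α β γ : Type*} [TopologicalSpace α]
    [TopologicalSpace β] [UniformSpace γ] {f : α → β → γ} (hf : Continuous ↿f) (a : α)
    {K : Set β} (hK : IsCompact K) : TendstoUniformlyOn f (f a) (nhds a) K := by
  intro u hu
  obtain ⟨v, hv, hvK⟩ :=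
    hK.mem_uniformity_of_prod hf.continuousOn (mem_univ a) (symm_le_uniformity hu)
  rw [nhdsWithin_univ] at hv
  filter_upwards [hv] with p hp x hx using hvK p hp x hx

section Flow

variable {p q r : ℕ} (M : Matrix (Fin r) (Fin r) ℂ) (c : Fin r → ℂ) (b : ℂ)

def siegelFlow (t : ℝ) (x : E4 p q r) : E4 p q r :=
  (x.1 + 2 * I * herm x.2.2.2 (ct M c t) + t * b, x.2.1, x.2.2.1,
    NormedSpace.exp ((t : ℂ) • M) *ᵥ x.2.2.2)

@[simp]
lemma siegelFlow_zero : siegelFlow (p := p) (q := q) M c b 0 = id := by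
  ext x <;> simp [siegelFlow]

lemma siegelFlow_add (s t : ℝ) (x : E4 p q r) :
    siegelFlow M c b (s + t) x = siegelFlow M c b s (siegelFlow M c b t x) := by
  simp only [siegelFlow, ct_add, herm_add_right, herm_mulVec_left, exp_ofReal_add_smul,
    mulVec_mulVec]
  congr 1
  push_cast
  ring

lemma siegelFlow_one (h : 1 ∉ spectrum ℂ (NormedSpace.exp M)) (x : E4 p q r) :
    siegelFlow M c b 1 x = (x.1 + 2 * I * herm x.2.2.2 c + b, x.2.1, x.2.2.1,
      NormedSpace.exp M *ᵥ x.2.2.2) := by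
  simp [siegelFlow, ct_one M c h]

lemma differentiable_siegelFlow (t : ℝ) :
    Differentiable ℂ (siegelFlow (p := p) (q := q) M c b t) := by
  have hw : Differentiable ℂ fun x : E4 p q r => x.2.2.2 := by fun_prop
  have hmulVec := (differentiable_mulVec (NormedSpace.exp ((t : ℂ) • M))).comp hw
  have hherm := (differentiable_herm_left (ct M c t)).comp hw
  unfold siegelFlow
  fun_prop

lemma continuous_uncurry_siegelFlow : Continuous ↿(siegelFlow (p := p) (q := q) M c b) := by
  change Continuous fun tx : ℝ × E4 p q r => siegelFlow M c b tx.1 tx.2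
  have hmulVec : Continuous fun tx : ℝ × E4 p q r =>
      NormedSpace.exp ((tx.1 : ℂ) • M) *ᵥ tx.2.2.2.2 :=
    ((continuous_exp_ofReal_smul M).comp continuous_fst).matrix_mulVec (by fun_prop)
  have hherm : Continuous fun tx : ℝ × E4 p q r => herm tx.2.2.2.2 (ct M c tx.1) := by
    have := continuous_ct M c
    unfold herm
    fun_prop
  unfold siegelFlow
  fun_prop

lemma mapsTo_siegelFlow (hM : Dissipative M) {t : ℝ} (ht : 0 ≤ t)
    (hc : ∃ x : Fin r → ℂ, Qt M t *ᵥ x = ct M c t ∧ t * b.im ≥ (herm (ct M c t) x).re) :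
    MapsTo (siegelFlow (p := p) (q := q) M c b t) (Siegel4 p q r) (Siegel4 p q r) := by
  obtain ⟨y, hy, hyb⟩ := hc
  intro x hx
  have hE := (hM.opNormLeOne_exp ht).enormSq_mulVec_le x.2.2.2 y
  rw [← Qt, hy, re_herm_comm (ct M c t)] at hE
  have him : (x.1 + 2 * I * herm x.2.2.2 (ct M c t) + t * b).im
      = x.1.im + 2 * (herm x.2.2.2 (ct M c t)).re + t * b.im := by
    simp
  simp only [Siegel4, mem_ofPred_eq, siegelFlow, him] at hx ⊢
  linarith

end Flow

theorem stmt8_general {p q r : ℕ}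
    (A : Matrix (Fin r) (Fin r) ℂ)
    (hAspec : ∀ μ ∈ spectrum ℂ A, ‖μ‖ < 1)
    (b : ℂ) (c : Fin r → ℂ)
    (ψ : E4 p q r → E4 p q r)
    (hψ : ∀ x, ψ x = (x.1 + 2 * Complex.I * herm x.2.2.2 c + b,
      x.2.1, x.2.2.1, A.mulVec x.2.2.2))
    (M : Matrix (Fin r) (Fin r) ℂ) (hM : NormedSpace.exp M = A)
    (hdis : Dissipative M)
    (hcond : ∀ t : ℝ, 0 ≤ t → ∃ x : Fin r → ℂ,
      (Qt M t).mulVec x = ct M c t ∧ t * b.im ≥ (herm (ct M c t) x).re) :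
    ∃ φt : ℝ → E4 p q r → E4 p q r,
      IsHolSemigroupOn (Siegel4 p q r) φt ∧ ∀ z ∈ Siegel4 p q r, φt 1 z = ψ z := by
  have hspec : 1 ∉ spectrum ℂ (NormedSpace.exp M) := fun h => by
    simpa using hAspec 1 (hM ▸ h)
  refine ⟨siegelFlow M c b, ⟨fun t ht => mapsTo_siegelFlow M c b hdis ht (hcond t ht),
    fun t _ => (differentiable_siegelFlow M c b t).differentiableOn, fun z _ => by simp,
    fun s _ t _ z _ => siegelFlow_add M c b s t z, fun K _ hK => ?_⟩, fun z _ => ?_⟩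
  · have h := (continuous_uncurry_siegelFlow M c b).tendstoUniformlyOn_of_isCompact 0 hK
    rw [siegelFlow_zero] at h
    exact fun u hu => (h u hu).filter_mono nhdsWithin_le_nhds
  · rw [siegelFlow_one M c b hspec, hψ, hM]

/-- Let `ψ(z,u,v,w) = (z + 2i⟨w,c⟩ + b, u, v, Aw)` be a parabolic self-map of the
Siegel half-plane, with `ρ(A) < 1`, `‖A‖ ≤ 1`, and `exp M = A`. If `M` is
dissipative and for every `t ≥ 0` the vector `c_t` is in the range of `Q_t` with
`t Im b ≥ x_tᴴ c_t`, then `ψ` embeds into a semigroup of holomorphic self-maps of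
`ℍ^N`. -/
theorem stmt8 {p q r : ℕ}
    (A : Matrix (Fin r) (Fin r) ℂ)
    (hAspec : ∀ μ ∈ spectrum ℂ A, ‖μ‖ < 1) (hAnorm : OpNormLeOne A)
    (b : ℂ) (c : Fin r → ℂ)
    (ψ : E4 p q r → E4 p q r)
    (hψ : ∀ x, ψ x = (x.1 + 2 * Complex.I * herm x.2.2.2 c + b,
      x.2.1, x.2.2.1, A.mulVec x.2.2.2))
    (hself : MapsTo ψ (Siegel4 p q r) (Siegel4 p q r))
    (M : Matrix (Fin r) (Fin r) ℂ) (hM : NormedSpace.exp M = A)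
    (hdis : Dissipative M)
    (hcond : ∀ t : ℝ, 0 ≤ t → ∃ x : Fin r → ℂ,
      (Qt M t).mulVec x = ct M c t ∧ t * b.im ≥ (herm (ct M c t) x).re) :
    ∃ φt : ℝ → E4 p q r → E4 p q r,
      IsHolSemigroupOn (Siegel4 p q r) φt ∧ ∀ z ∈ Siegel4 p q r, φt 1 z = ψ z :=
  stmt8_general A hAspec b c ψ hψ M hM hdis hcond
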